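/- arXiv:1004.0872 — 6 statements merged into one kernel-verified Lean document; each statement's English description precedes it below -/
import Mathlib

section
/- Let n, g, f3, e, t, q be natural numbers and let c be a rational number with 2c an integer, such that (as rational numbers): f3 = n(n-1)/2 - n; -e + t + q = 2 - 2g - n²/4 + c²; 2e = 3t + 4q; and f3 ≥ t + q. Then q ≥ 4g + (3n)/2 - (4 + 2c²). (This is the linear-algebraic content of Theorem 4.4 (main theorem): a slicing of genus g of a 2-neighborly combinatorial 3-manifold with n vertices and vertex partition sizes n/2 - c and n/2 + c has at least 4g + 3n/2 - (4 + 2c²) quadrilaterals.) -/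
theorem quad_lower_bound_two_neighborly (n g f3 e t q : ℕ) (c : ℚ)
    (hc : ∃ z : ℤ, 2 * c = z)
    (hf3 : (f3 : ℚ) = n * (n - 1) / 2 - n)
    (heuler : -(e : ℚ) + t + q = 2 - 2 * g - (n : ℚ) ^ 2 / 4 + c ^ 2)
    (hDS : 2 * (e : ℚ) = 3 * t + 4 * q)
    (hlink : (f3 : ℚ) ≥ t + q) :
    (q : ℚ) ≥ 4 * g + 3 * n / 2 - (4 + 2 * c ^ 2) := by
  nlinarith [heuler, hDS, hlink, hf3]
end

section
/- Let k ≥ 3 be a natural number, set n = 2k and g = (k-1)(k-2)/2, and let f3, e, t, q be natural numbers satisfying (as integers): f3 = (2k)(2k-1)/2 - 2k; -e + t + q = 2 - 2g - k²; 2e = 3t + 4q; and f3 ≥ t + q. Then t = 0, q = f3 and e = 2·f3. (This is the equality analysis in the proof of Theorem 4.4: in the sharp case g = binom(k-1,2) the slicing is forced to be quadrangulated, with one quadrilateral in every tetrahedron.) -/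
theorem equality_case_quadrangulated (k n g f3 e t q : ℕ)
    (hk : 3 ≤ k) (hn : n = 2 * k)
    (hg : (g : ℤ) = ((k : ℤ) - 1) * ((k : ℤ) - 2) / 2)
    (hf3 : (f3 : ℤ) = (2 * (k : ℤ)) * (2 * (k : ℤ) - 1) / 2 - 2 * k)
    (heuler : -(e : ℤ) + t + q = 2 - 2 * g - (k : ℤ) ^ 2)
    (hDS : 2 * (e : ℤ) = 3 * t + 4 * q)
    (hlink : (f3 : ℤ) ≥ t + q) :
    t = 0 ∧ q = f3 ∧ e = 2 * f3 := by
  -- (k-1)(k-2) is even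
  obtain ⟨c, hc⟩ : Even (((k : ℤ) - 1) * ((k : ℤ) - 2)) := by
    have := Int.even_mul_succ_self ((k : ℤ) - 2)
    have h : ((k : ℤ) - 2) * ((k : ℤ) - 2 + 1) = ((k : ℤ) - 1) * ((k : ℤ) - 2) := by ring
    rwa [h] at this
  rw [hc] at hg
  have h1 : 2 * (g : ℤ) = ((k : ℤ) - 1) * ((k : ℤ) - 2) := by
    rw [hc]; omega
  -- simplify f3
  have h2 : (2 * (k : ℤ)) * (2 * (k : ℤ) - 1) = 2 * ((k : ℤ) * (2 * (k : ℤ) - 1)) := by ring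
  rw [h2, Int.mul_ediv_cancel_left _ two_ne_zero] at hf3
  have key : (t : ℤ) + 2 * q = 2 * f3 := by
    linear_combination (-2 : ℤ) * heuler - hDS - 2 * hf3 + 2 * h1
  omega
end

section
/- Let n and χ be integers with n ≥ 4 such that 3(n - χ) ≤ n(n-1)/2. Then, as real numbers, n ≥ (7 + √(49 - 24χ))/2. (This is the Heawood inequality: a triangulated closed surface with Euler characteristic χ needs at least (7 + √(49 - 24χ))/2 vertices.) -/
theorem heawood_inequality (n χ : ℤ) (hn : n ≥ 4)
    (he : 3 * (n - χ) ≤ n * (n - 1) / 2) :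
    (n : ℝ) ≥ (7 + Real.sqrt (49 - 24 * (χ : ℝ))) / 2 := by
  have h6 : 3 * (n - χ) * 2 ≤ n * (n - 1) :=
    (Int.le_ediv_iff_mul_le (by norm_num)).mp he
  have h6' : (3 * ((n : ℝ) - χ) * 2) ≤ n * (n - 1) := by exact_mod_cast h6
  have hn' : (4 : ℝ) ≤ n := by exact_mod_cast hn
  have hkey : Real.sqrt (49 - 24 * (χ : ℝ)) ≤ 2 * n - 7 := by
    have : (49 : ℝ) - 24 * χ ≤ (2 * n - 7) ^ 2 := by nlinarith
    calc Real.sqrt (49 - 24 * (χ : ℝ)) ≤ Real.sqrt ((2 * n - 7) ^ 2) :=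
          Real.sqrt_le_sqrt this
      _ = 2 * n - 7 := Real.sqrt_sq (by linarith)
  linarith
end

section
/- Let m, n, p, e be natural numbers and χ an integer with m ≥ 3, n ≥ m + 1, 2e = m·p, χ = n - e + p, and p·m(m-1)/2 - e ≤ n(n-1)/2. Then, as real numbers, n ≥ ((2m+1) + √((2m+1)² - 8mχ))/2, with equality if and only if p·m(m-1)/2 - e = n(n-1)/2. (This is the counting core of Proposition 5.3: a polyhedral m-gon map with Euler characteristic χ needs at least ((2m+1) + √((2m+1)² - 8mχ))/2 vertices, with equality exactly for weakly neighborly maps.) -/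
lemma mgon_aux (A Dv N R : ℝ) (hAn : 2 * N - A ≥ 1)
    (hsq : (2 * N - A) ^ 2 = Dv + 4 * R) (hR0 : 0 ≤ R) :
    N ≥ (A + Real.sqrt Dv) / 2 ∧ (N = (A + Real.sqrt Dv) / 2 ↔ R = 0) := by
  have hmain : Real.sqrt Dv ≤ 2 * N - A := by
    have h1 : Real.sqrt Dv ≤ Real.sqrt ((2 * N - A) ^ 2) := by
      apply Real.sqrt_le_sqrt; rw [hsq]; linarith
    rwa [Real.sqrt_sq (by linarith)] at h1
  refine ⟨by linarith, ?_, ?_⟩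
  · intro heq
    have hs : Real.sqrt Dv = 2 * N - A := by linarith
    have hDnn : 0 ≤ Dv := by
      by_contra hneg
      push_neg at hneg
      have h0 : Real.sqrt Dv = 0 := Real.sqrt_eq_zero_of_nonpos (le_of_lt hneg)
      rw [h0] at hs; linarith
    have hD2 : Dv = (2 * N - A) ^ 2 := by rw [← hs, Real.sq_sqrt hDnn]
    linarith
  · intro hR
    have hD2 : Dv = (2 * N - A) ^ 2 := by rw [hsq, hR]; ring
    have hs : Real.sqrt Dv = 2 * N - A := by
      rw [hD2, Real.sqrt_sq (by linarith)]
    linarith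

theorem mgon_map_vertex_bound (m n p e : ℕ) (χ : ℤ)
    (hm : m ≥ 3) (hn : n ≥ m + 1)
    (hDS : 2 * e = m * p)
    (heuler : χ = (n : ℤ) - e + p)
    (hpairs : (p : ℤ) * (m * (m - 1) / 2) - e ≤ n * (n - 1) / 2) :
    (n : ℝ) ≥ ((2 * m + 1) + Real.sqrt ((2 * (m : ℝ) + 1) ^ 2 - 8 * m * (χ : ℝ))) / 2 ∧
    ((n : ℝ) = ((2 * m + 1) + Real.sqrt ((2 * (m : ℝ) + 1) ^ 2 - 8 * m * (χ : ℝ))) / 2 ↔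
      (p : ℤ) * (m * (m - 1) / 2) - e = n * (n - 1) / 2) := by
  -- divisibility facts for the exact divisions
  have hdm : (2:ℤ) ∣ (m:ℤ) * ((m:ℤ) - 1) := by
    have h := Int.even_mul_succ_self ((m:ℤ) - 1)
    have : ((m:ℤ) - 1) * ((m:ℤ) - 1 + 1) = (m:ℤ) * ((m:ℤ) - 1) := by ring
    rw [this] at h
    exact h.two_dvd
  have hdn : (2:ℤ) ∣ (n:ℤ) * ((n:ℤ) - 1) := by
    have h := Int.even_mul_succ_self ((n:ℤ) - 1)
    have : ((n:ℤ) - 1) * ((n:ℤ) - 1 + 1) = (n:ℤ) * ((n:ℤ) - 1) := by ring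
    rw [this] at h
    exact h.two_dvd
  have hkm : ((m:ℤ) * ((m:ℤ) - 1) / 2) * 2 = (m:ℤ) * ((m:ℤ) - 1) := Int.ediv_mul_cancel hdm
  have hkn : ((n:ℤ) * ((n:ℤ) - 1) / 2) * 2 = (n:ℤ) * ((n:ℤ) - 1) := Int.ediv_mul_cancel hdn
  have hDSZ : (2:ℤ) * e = (m:ℤ) * p := by exact_mod_cast hDS
  -- key algebraic identity: the pair count equals m*(n-χ)
  have key : (p : ℤ) * ((m:ℤ) * ((m:ℤ) - 1) / 2) - e = (m:ℤ) * ((n:ℤ) - χ) := by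
    have h2 : (2:ℤ) * ((p : ℤ) * ((m:ℤ) * ((m:ℤ) - 1) / 2) - e)
        = (2:ℤ) * ((m:ℤ) * ((n:ℤ) - χ)) := by
      have : (2:ℤ) * ((p : ℤ) * ((m:ℤ) * ((m:ℤ) - 1) / 2) - e)
          = (p:ℤ) * (((m:ℤ) * ((m:ℤ) - 1) / 2) * 2) - 2 * e := by ring
      rw [this, hkm]
      have hχ : (m:ℤ) * ((n:ℤ) - χ) = (m:ℤ) * e - (m:ℤ) * p := by
        rw [heuler]; ring
      rw [hχ]
      nlinarith [hDSZ]
    exact mul_left_cancel₀ (two_ne_zero) h2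
  -- integer inequality: 0 ≤ n(n-1) - 2m(n-χ)
  have hRz : (0:ℤ) ≤ (n:ℤ) * ((n:ℤ) - 1) - 2 * (m:ℤ) * ((n:ℤ) - χ) := by
    rw [key] at hpairs
    nlinarith [hkn, hpairs]
  -- real versions
  have hR0 : (0:ℝ) ≤ (n:ℝ) * ((n:ℝ) - 1) - 2 * (m:ℝ) * ((n:ℝ) - (χ:ℝ)) := by
    exact_mod_cast hRz
  have hnm : (n:ℝ) ≥ (m:ℝ) + 1 := by exact_mod_cast hn
  have hAn : 2 * (n:ℝ) - (2 * (m:ℝ) + 1) ≥ 1 := by linarith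
  have hsq : (2 * (n:ℝ) - (2 * (m:ℝ) + 1)) ^ 2
      = ((2 * (m : ℝ) + 1) ^ 2 - 8 * m * (χ : ℝ))
        + 4 * ((n:ℝ) * ((n:ℝ) - 1) - 2 * (m:ℝ) * ((n:ℝ) - (χ:ℝ))) := by ring
  obtain ⟨h1, h2⟩ := mgon_aux (2 * (m:ℝ) + 1) ((2 * (m : ℝ) + 1) ^ 2 - 8 * m * (χ : ℝ))
    (n:ℝ) ((n:ℝ) * ((n:ℝ) - 1) - 2 * (m:ℝ) * ((n:ℝ) - (χ:ℝ))) hAn hsq hR0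
  refine ⟨h1, ?_⟩
  rw [h2, key]
  constructor
  · intro hR
    have hRz0 : (n:ℤ) * ((n:ℤ) - 1) - 2 * (m:ℤ) * ((n:ℤ) - χ) = 0 := by exact_mod_cast hR
    have h3 : (2:ℤ) * ((m:ℤ) * ((n:ℤ) - χ)) = (2:ℤ) * ((n:ℤ) * ((n:ℤ) - 1) / 2) := by
      linear_combination -hRz0 - hkn
    exact mul_left_cancel₀ (two_ne_zero) h3
  · intro heq
    have hRz0 : (n:ℤ) * ((n:ℤ) - 1) - 2 * (m:ℤ) * ((n:ℤ) - χ) = 0 := by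
      linear_combination -2 * heq - hkn
    exact_mod_cast hRz0
end

section
/- Let n, e, t, q be natural numbers and χ an integer with n ≥ 4, 2e = 3t + 4q, and χ = n - e + t + q. Then e = n(n-1)/2 - 2q if and only if, as real numbers, n = (7 + √(49 + 8q - 24χ))/2. (This is the equivalence b) ⇔ c) of Lemma 5.4.) -/
theorem weakly_neighborly_b_iff_c (n e t q : ℕ) (χ : ℤ)
    (hn : n ≥ 4)
    (hDS : 2 * e = 3 * t + 4 * q)
    (heuler : χ = (n : ℤ) - e + t + q) :
    (e : ℤ) = n * (n - 1) / 2 - 2 * q ↔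
      (n : ℝ) = (7 + Real.sqrt (49 + 8 * (q : ℝ) - 24 * (χ : ℝ))) / 2 := by
  have hDS' : (2 * e : ℤ) = 3 * t + 4 * q := by exact_mod_cast hDS
  have h1 : (e : ℤ) = 3 * n - q - 3 * χ := by linarith
  have hk : Even ((n : ℤ) * (n - 1)) := Int.even_mul_pred_self n
  have hn' : (4 : ℤ) ≤ n := by exact_mod_cast hn
  -- b ↔ key integer identity
  have hbi : ((e : ℤ) = n * (n - 1) / 2 - 2 * q) ↔
      ((n : ℤ) * n - 7 * n = 2 * q - 6 * χ) := by
    obtain ⟨c, hc⟩ := hk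
    constructor
    · intro hb
      have : (n : ℤ) * (n - 1) = 2 * c := by omega
      have hb2 : (e : ℤ) = c - 2 * q := by omega
      nlinarith
    · intro hkey
      have : (n : ℤ) * (n - 1) = 2 * c := by omega
      have hc2 : (n : ℤ) * n - n = 2 * c := by nlinarith
      omega
  rw [hbi]
  have h7 : (0 : ℝ) ≤ 2 * (n : ℝ) - 7 := by
    have : (4 : ℝ) ≤ n := by exact_mod_cast hn
    linarith
  constructor
  · intro hkey
    have hkeyR : (n : ℝ) * n - 7 * n = 2 * (q : ℝ) - 6 * (χ : ℝ) := by
      exact_mod_cast hkey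
    have hD : (49 + 8 * (q : ℝ) - 24 * (χ : ℝ)) = (2 * n - 7) ^ 2 := by nlinarith
    rw [hD, Real.sqrt_sq h7]
    ring
  · intro hc
    have hs : Real.sqrt (49 + 8 * (q : ℝ) - 24 * (χ : ℝ)) = 2 * n - 7 := by
      linarith [hc]
    have hDnn : (0 : ℝ) ≤ 49 + 8 * (q : ℝ) - 24 * (χ : ℝ) := by
      by_contra h
      push_neg at h
      have := Real.sqrt_eq_zero_of_nonpos h.le
      rw [this] at hs
      have : (4 : ℝ) ≤ n := by exact_mod_cast hn
      linarith
    have hD : (49 + 8 * (q : ℝ) - 24 * (χ : ℝ)) = (2 * n - 7) ^ 2 := by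
      rw [← hs, Real.sq_sqrt hDnn]
    have hkeyR : (n : ℝ) * n - 7 * n = 2 * (q : ℝ) - 6 * (χ : ℝ) := by nlinarith
    exact_mod_cast hkeyR
end

section
/- There are no natural numbers n1, n2, g with g ≥ 2, g ≤ (n1-1)(n1-2)/2, g ≤ (n2-1)(n2-2)/2, and n1·n2·(15 - n1·n2 - n1 - n2) = 12(2 - 2g) (as integers). (This is the χ ≤ -2 case in the proof of Theorem 5.6: no weakly neighborly slicing of a combinatorial 3-manifold can have genus at least 2.) -/
theorem no_higher_genus_weakly_neighborly :
    ¬ ∃ (n1 n2 g : ℕ), g ≥ 2 ∧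
      (g : ℤ) ≤ ((n1 : ℤ) - 1) * ((n1 : ℤ) - 2) / 2 ∧
      (g : ℤ) ≤ ((n2 : ℤ) - 1) * ((n2 : ℤ) - 2) / 2 ∧
      (n1 : ℤ) * n2 * (15 - (n1 : ℤ) * n2 - n1 - n2) = 12 * (2 - 2 * (g : ℤ)) := by
  rintro ⟨n1, n2, g, hg, h1, h2, heq⟩
  rw [Int.le_ediv_iff_mul_le (by norm_num)] at h1 h2
  set a := (n1 : ℤ) with ha
  set b := (n2 : ℤ) with hb
  have ha0 : 0 ≤ a := Int.natCast_nonneg n1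
  have hb0 : 0 ≤ b := Int.natCast_nonneg n2
  have hg2 : (2:ℤ) ≤ (g:ℤ) := by exact_mod_cast hg
  -- a ≥ 4
  have ha4 : 4 ≤ a := by nlinarith
  have hb4 : 4 ≤ b := by nlinarith
  rcases le_total a b with h | h
  · nlinarith [mul_le_mul h1 h1 (by nlinarith : (0:ℤ) ≤ (g:ℤ)*2) (by nlinarith : (0:ℤ) ≤ (a-1)*(a-2)), mul_le_mul_of_nonneg_left h (by linarith : (0:ℤ) ≤ a), sq_nonneg (a*b - 16), sq_nonneg (a-b)]
  · nlinarith [mul_le_mul h2 h2 (by nlinarith : (0:ℤ) ≤ (g:ℤ)*2) (by nlinarith : (0:ℤ) ≤ (b-1)*(b-2)), mul_le_mul_of_nonneg_left h (by linarith : (0:ℤ) ≤ b), sq_nonneg (a*b - 16), sq_nonneg (a-b)]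
end
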